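/- Let x = (x₁,x₂) and y = (y₁,y₂) be commuting ω-Weyl pairs of level N in a unital ℂ-algebra A, let λ > 0, and set w := −x₂⁻¹x₁y₂ (so that w^N = −1). Let Ψ : R → ℂ be a nonzero solution of λ'·Ψ(v) = Ψ(ωv)·(1 − vλ) for all v ∈ R, where R := {v ∈ ℂ : v^N = −1}, and let p ∈ ℂ[X] be the unique polynomial of degree < N with p(v) = Ψ(v) for all v ∈ R (Lagrange interpolation at the N distinct points of R). Define T := (Σ_{i,j=0}^{N−1} ω^{−ij} y₁^i x₂^j) · p(w) ∈ A. Then T intertwines the root-of-unity flip: T·(x•_λy)_k = x_k·T and T·(x*_λy)_k = y_k·T for k = 1, 2. -/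

import Mathlib

/-- An `ω`-Weyl pair of level `N` in a unital `ℂ`-algebra:
`a₁a₂ = ω a₂a₁` and `a₁^N = a₂^N = 1`. -/
def IsCyclicWeylPair {A : Type*} [Ring A] [Algebra ℂ A] (ω : ℂ) (N : ℕ) (a : A × A) : Prop :=
  a.1 * a.2 = ω • (a.2 * a.1) ∧ a.1 ^ N = 1 ∧ a.2 ^ N = 1

/-- Two pairs commute componentwise. -/
def PairCommute {A : Type*} [Ring A] (x y : A × A) : Prop :=
  ∀ i j : Fin 2, Commute (if i = 0 then x.1 else x.2) (if j = 0 then y.1 else y.2)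

/-- `λ' := (1 + λ^N)^{1/N}`, the positive real `N`-th root. -/
noncomputable def lamPrime (lam : ℝ) (N : ℕ) : ℝ := (1 + lam ^ N) ^ ((1 : ℝ) / N)

/-- The root-of-unity "dot" operation `x •_λ y := (x₁y₁, (x₂ + x₁y₂λ)/λ')`. -/
noncomputable def Cdot {A : Type*} [Ring A] [Algebra ℂ A] (lam : ℝ) (N : ℕ)
    (x y : A × A) : A × A :=
  (x.1 * y.1, (((lamPrime lam N)⁻¹ : ℝ) : ℂ) • (x.2 + ((lam : ℝ) : ℂ) • (x.1 * y.2)))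

/-- The root-of-unity "star" operation
`x *_λ y := (y₁x₂((x•_λy)₂)⁻¹, y₂((x•_λy)₂)⁻¹)`. -/
noncomputable def Cstar {A : Type*} [Ring A] [Algebra ℂ A] (lam : ℝ) (N : ℕ)
    (x y : A × A) : A × A :=
  (y.1 * x.2 * Ring.inverse (Cdot lam N x y).2, y.2 * Ring.inverse (Cdot lam N x y).2)

/-- The compact (root of unity) quantum dilogarithm intertwiner
`T := (Σ_{i,j=0}^{N−1} ω^{−ij} y₁^i x₂^j) · p(w)`, where `w := −x₂⁻¹x₁y₂`. -/
noncomputable def Tintertwiner {A : Type*} [Ring A] [Algebra ℂ A]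
    (ω : ℂ) (N : ℕ) (x y : A × A) (p : Polynomial ℂ) : A :=
  (∑ i ∈ Finset.range N, ∑ j ∈ Finset.range N,
      (ω⁻¹ ^ (i * j)) • (y.1 ^ i * x.2 ^ j)) *
    Polynomial.aeval (-(Ring.inverse x.2 * x.1 * y.2)) p

/-!
Write `T = S · p(w)` with `S = Σ ω^{-ij} y₁^i x₂^j` and `w = -x₂⁻¹x₁y₂`. The Weyl relations
say that each of `x₁, x₂, y₁, y₂` commutes with `w` up to a power of `ω`, so `p(w)` moves past
them at the cost of rescaling its argument; and `S` is a discrete Fourier kernel, on which the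
same conjugations shift one summation index, harmless because `y₁^N = x₂^N = 1`. The only
analytic input is the functional equation `p(ωw)(1 - λw) = λ' p(w)`: as a polynomial identity
it holds at the `N` distinct roots of `X^N + 1`, hence modulo `X^N + 1`, and `w^N = -1`.
Finally `(x •_λ y)₂ = λ'⁻¹ x₂ (1 - λw)` is invertible since `(λw)^N = -λ^N ≠ 1`.
-/

open Polynomial Finset

section QCommute

variable {R A : Type*} [CommSemiring R] [Semiring A] [Algebra R A] {q r : R} {a b c : A}

def QCommute (q : R) (a b : A) : Prop := a * b = q • (b * a)

theorem qCommute_one_iff : QCommute (1 : R) a b ↔ Commute a b := by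
  rw [QCommute, one_smul]; rfl

namespace QCommute

protected theorem eq (h : QCommute q a b) : a * b = q • (b * a) := h

theorem mul_left (ha : QCommute q a c) (hb : QCommute r b c) : QCommute (q * r) (a * b) c := by
  unfold QCommute at *
  rw [mul_assoc, hb, mul_smul_comm, ← mul_assoc, ha, smul_mul_assoc, smul_smul, mul_assoc,
    mul_comm q]

theorem mul_right (hb : QCommute q a b) (hc : QCommute r a c) : QCommute (q * r) a (b * c) := by
  unfold QCommute at *
  rw [← mul_assoc, hb, smul_mul_assoc, mul_assoc, hc, mul_smul_comm, smul_smul, mul_assoc]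

theorem pow_left (h : QCommute q a b) : ∀ k : ℕ, QCommute (q ^ k) (a ^ k) b
  | 0 => by simp [QCommute]
  | k + 1 => by rw [pow_succ, pow_succ]; exact (h.pow_left k).mul_left h

theorem pow_right (h : QCommute q a b) : ∀ k : ℕ, QCommute (q ^ k) a (b ^ k)
  | 0 => by simp [QCommute]
  | k + 1 => by rw [pow_succ, pow_succ]; exact (h.pow_right k).mul_right h

theorem mul_pow (h : QCommute q a b) : ∀ k : ℕ, (b * a) ^ k = q ^ k.choose 2 • (b ^ k * a ^ k)
  | 0 => by simp
  | k + 1 => calc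
      (b * a) ^ (k + 1) = q ^ k.choose 2 • (b ^ k * (a ^ k * b) * a) := by
        rw [pow_succ, h.mul_pow k, smul_mul_assoc]; simp only [mul_assoc]
      _ = q ^ (k + 1).choose 2 • (b ^ (k + 1) * a ^ (k + 1)) := by
        rw [(h.pow_left k).eq, mul_smul_comm, smul_mul_assoc, smul_smul, ← pow_add,
          Nat.choose_succ_succ', Nat.choose_one_right, add_comm k, pow_succ b, pow_succ a]
        simp only [mul_assoc]

theorem aeval_mul (h : QCommute q a b) (f : R[X]) : aeval a f * b = b * aeval (q • a) f := by
  induction f using Polynomial.induction_on' with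
  | add f g hf hg => rw [map_add, map_add, add_mul, mul_add, hf, hg]
  | monomial n s =>
    rw [aeval_monomial, aeval_monomial, ← Algebra.smul_def, ← Algebra.smul_def, _root_.smul_pow,
      smul_mul_assoc, (h.pow_left n).eq, mul_smul_comm, mul_smul_comm]

theorem ringInverse_left (h : QCommute q a b) (hb : IsUnit b) :
    QCommute q (Ring.inverse b) a := calc
  Ring.inverse b * a = Ring.inverse b * (a * b) * Ring.inverse b := by
    rw [mul_assoc, mul_assoc, Ring.mul_inverse_cancel _ hb, mul_one]
  _ = q • (a * Ring.inverse b) := by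
    rw [h.eq, mul_smul_comm, smul_mul_assoc, ← mul_assoc, Ring.inverse_mul_cancel _ hb, one_mul]

theorem commute_aeval (h : QCommute (1 : R) a b) (f : R[X]) : Commute (aeval a f) b := by
  rw [Commute, SemiconjBy, h.aeval_mul, one_smul]

end QCommute

end QCommute

theorem QCommute.neg_left {R A : Type*} [CommSemiring R] [Ring A] [Algebra R A] {q : R}
    {a b : A} (h : QCommute q a b) : QCommute q (-a) b := by
  rw [QCommute, neg_mul, mul_neg, smul_neg, h.eq]

theorem QCommute.symm {K A : Type*} [Field K] [Semiring A] [Algebra K A] {q : K} {a b : A}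
    (h : QCommute q a b) (hq : q ≠ 0) : QCommute q⁻¹ b a := by
  rw [QCommute, h.eq, smul_smul, inv_mul_cancel₀ hq, one_smul]

theorem Finset.sum_range_rotate {M : Type*} [AddCommMonoid M] {N : ℕ} (f : ℕ → M)
    (hf : f N = f 0) : ∑ i ∈ range N, f (i + 1) = ∑ i ∈ range N, f i := by
  cases N with
  | zero => simp
  | succ n => rw [sum_range_succ, sum_range_succ' f, hf]

section WeylSum

variable {R A : Type*} [CommSemiring R] [Semiring A] [Algebra R A] {N : ℕ} {ζ α β : R}
  {u v z : A}

def weylSum (ζ : R) (N : ℕ) (u v : A) : A :=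
  ∑ i ∈ range N, ∑ j ∈ range N, ζ ^ (i * j) • (u ^ i * v ^ j)

theorem mul_weylSum (hu : QCommute α z u) (hv : QCommute β z v) :
    z * weylSum ζ N u v = weylSum ζ N (α • u) (β • v) * z := by
  simp only [weylSum, mul_sum, sum_mul]
  refine sum_congr rfl fun i _ => sum_congr rfl fun j _ => ?_
  rw [mul_smul_comm, ((hu.pow_right i).mul_right (hv.pow_right j)).eq, _root_.smul_pow,
    _root_.smul_pow, smul_mul_smul_comm, smul_mul_assoc, smul_mul_assoc, smul_smul]

theorem commute_weylSum (hu : Commute z u) (hv : Commute z v) :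
    Commute z (weylSum ζ N u v) := by
  rw [Commute, SemiconjBy, mul_weylSum (qCommute_one_iff.2 hu) (qCommute_one_iff.2 hv), one_smul,
    one_smul]

theorem mul_weylSum_smul_right (hu : u ^ N = 1) (hζ : ζ ^ N = 1) :
    u * weylSum ζ N u (ζ • v) = weylSum ζ N u v := by
  unfold weylSum
  rw [mul_sum, ← sum_range_rotate (fun i => ∑ j ∈ range N, ζ ^ (i * j) • (u ^ i * v ^ j))
    (by simp [hu, pow_mul, hζ])]
  refine sum_congr rfl fun i _ => ?_
  rw [mul_sum]
  refine sum_congr rfl fun j _ => ?_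
  simp only [_root_.smul_pow, mul_smul_comm, smul_smul]
  rw [← pow_add, ← mul_assoc, ← pow_succ', add_one_mul]

theorem weylSum_smul_left_mul (hv : v ^ N = 1) (hζ : ζ ^ N = 1) :
    weylSum ζ N (ζ • u) v * v = weylSum ζ N u v := by
  unfold weylSum
  rw [sum_mul]
  refine sum_congr rfl fun i _ => ?_
  rw [sum_mul, ← sum_range_rotate (fun j => ζ ^ (i * j) • (u ^ i * v ^ j))
    (by simp [hv, mul_comm i N, pow_mul, hζ])]
  refine sum_congr rfl fun j _ => ?_
  simp only [_root_.smul_pow, smul_mul_assoc, smul_smul]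
  rw [← pow_add, mul_assoc, ← pow_succ, mul_add_one]

end WeylSum

theorem IsPrimitiveRoot.pow_choose_two {R : Type*} [CommRing R] [IsDomain R] {ω : R} {N : ℕ}
    (hω : IsPrimitiveRoot ω N) (hN : N ≠ 0) : ω ^ N.choose 2 = (-1) ^ (N + 1) := by
  obtain ⟨m, rfl | rfl⟩ := Nat.even_or_odd' N
  · have hm : m ≠ 0 := by omega
    have half : ω ^ m = -1 :=
      (by simpa [hm] using hω.pow_of_dvd hm (dvd_mul_left m 2) : IsPrimitiveRoot (ω ^ m) 2)
        |>.eq_neg_one_of_two_right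
    have hchoose : (2 * m).choose 2 = m * (2 * m - 1) := by
      rw [Nat.choose_two_right, mul_assoc, Nat.mul_div_cancel_left _ two_pos]
    rw [hchoose, pow_mul, half, Odd.neg_one_pow ⟨m - 1, by omega⟩, Odd.neg_one_pow ⟨m, rfl⟩]
  · have hchoose : (2 * m + 1).choose 2 = (2 * m + 1) * m := by
      rw [Nat.choose_two_right, Nat.add_sub_cancel, mul_left_comm,
        Nat.mul_div_cancel_left _ two_pos]
    rw [hchoose, pow_mul, hω.pow_eq_one, one_pow, Even.neg_one_pow ⟨m + 1, by ring⟩]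

theorem Polynomial.aeval_eq_zero_of_forall_pow_eq {K A : Type*} [Field K] [IsAlgClosed K]
    [Ring A] [Algebra K A] {N : ℕ} {ω c : K} (hω : IsPrimitiveRoot ω N) (hN : N ≠ 0)
    (hc : c ≠ 0) {f : K[X]} (hf : ∀ v : K, v ^ N = c → f.eval v = 0) {w : A}
    (hw : w ^ N = algebraMap K A c) : aeval w f = 0 := by
  obtain ⟨g, rfl⟩ : X ^ N - C c ∣ f := by
    rcases eq_or_ne f 0 with rfl | hf0
    · exact dvd_zero _
    refine (IsAlgClosed.splits _).dvd_of_roots_le_roots (X_pow_sub_C_ne_zero hN.bot_lt c) ?_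
    refine (Multiset.le_iff_subset (hω.nthRoots_nodup hc)).2 fun v hv => ?_
    exact (mem_roots hf0).2 (hf v ((mem_nthRoots hN.bot_lt).1 hv))
  simp [hw]

theorem isUnit_one_sub_of_pow_eq_algebraMap {K A : Type*} [Field K] [Ring A] [Algebra K A]
    {z : A} {c : K} {n : ℕ} (hz : z ^ n = algebraMap K A c) (hc : c ≠ 1) : IsUnit (1 - z) := by
  have hgeom : (1 - z) * ∑ i ∈ range n, z ^ i = algebraMap K A (1 - c) := by
    rw [mul_neg_geom_sum, hz, map_sub, map_one]
  have hcomm : Commute (1 - z) (∑ i ∈ range n, z ^ i) :=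
    (Commute.one_left _).sub_left (Commute.sum_right _ _ _ fun i _ => (Commute.refl z).pow_right i)
  refine (hcomm.isUnit_mul_iff.1 ?_).1
  rw [hgeom]
  exact (isUnit_iff_ne_zero.2 (sub_ne_zero.2 hc.symm)).map _

theorem Polynomial.aeval_smul_mul_one_sub_eq {K A : Type*} [Field K] [IsAlgClosed K] [Ring A]
    [Algebra K A] {N : ℕ} {ω μ d : K} (hω : IsPrimitiveRoot ω N) (hN : N ≠ 0) {p : K[X]}
    (hp : ∀ v : K, v ^ N = -1 → d * p.eval v = p.eval (ω * v) * (1 - v * μ)) {w : A}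
    (hw : w ^ N = -1) : aeval (ω • w) p * (1 - μ • w) = d • aeval w p := by
  have hf : aeval w (p.comp (C ω * X) * (1 - C μ * X) - C d * p) = 0 := by
    refine aeval_eq_zero_of_forall_pow_eq hω hN (neg_ne_zero.2 one_ne_zero) (fun v hv => ?_)
      (by rw [hw, map_neg, map_one])
    simp only [eval_sub, eval_mul, eval_comp, eval_C, eval_X, eval_one, hp v hv]
    ring
  simpa only [map_sub, map_mul, aeval_comp, map_one, aeval_C, aeval_X, ← Algebra.smul_def,
    sub_eq_zero] using hf

theorem pairCommute_iff {A : Type*} [Ring A] {x y : A × A} :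
    PairCommute x y ↔
      Commute x.1 y.1 ∧ Commute x.1 y.2 ∧ Commute x.2 y.1 ∧ Commute x.2 y.2 := by
  simp [PairCommute, Fin.forall_fin_two, and_assoc]

noncomputable def dilogArg {A : Type*} [Ring A] (x y : A × A) : A :=
  -(Ring.inverse x.2 * x.1 * y.2)

theorem snd_mul_dilogArg {A : Type*} [Ring A] {x y : A × A} (hx₂ : IsUnit x.2) :
    x.2 * dilogArg x y = -(x.1 * y.2) := by
  rw [dilogArg, mul_neg, ← mul_assoc, ← mul_assoc, Ring.mul_inverse_cancel _ hx₂, one_mul]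

section CyclicWeylPair

variable {A : Type*} [Ring A] [Algebra ℂ A] {N : ℕ} {ω : ℂ} {x y : A × A}

theorem IsCyclicWeylPair.qCommute (hx : IsCyclicWeylPair ω N x) : QCommute ω x.1 x.2 := hx.1

theorem IsCyclicWeylPair.isUnit_snd (hx : IsCyclicWeylPair ω N x) (hN : N ≠ 0) : IsUnit x.2 :=
  IsUnit.of_pow_eq_one hx.2.2 hN

theorem Tintertwiner_eq (p : ℂ[X]) :
    Tintertwiner ω N x y p = weylSum ω⁻¹ N y.1 x.2 * aeval (dilogArg x y) p := rfl

theorem qCommute_dilogArg_left_fst (hx : IsCyclicWeylPair ω N x) (hxy : PairCommute x y)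
    (hN : N ≠ 0) : QCommute ω (dilogArg x y) x.1 := by
  obtain ⟨-, h12, -, -⟩ := pairCommute_iff.1 hxy
  unfold dilogArg
  simpa only [mul_one] using (((hx.qCommute.ringInverse_left (hx.isUnit_snd hN)).mul_left
    (qCommute_one_iff.2 (Commute.refl x.1))).mul_left (qCommute_one_iff.2 h12.symm)).neg_left

theorem qCommute_dilogArg_left_snd (hx : IsCyclicWeylPair ω N x) (hxy : PairCommute x y)
    (hN : N ≠ 0) : QCommute ω (dilogArg x y) x.2 := by
  obtain ⟨-, -, -, h22⟩ := pairCommute_iff.1 hxy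
  unfold dilogArg
  simpa only [mul_one, one_mul] using
    (((qCommute_one_iff.2 (Commute.refl x.2)).ringInverse_left (hx.isUnit_snd hN)).mul_left
      hx.qCommute |>.mul_left (qCommute_one_iff.2 h22.symm)).neg_left

theorem qCommute_dilogArg_right_fst (hω : IsPrimitiveRoot ω N) (hx : IsCyclicWeylPair ω N x)
    (hy : IsCyclicWeylPair ω N y) (hxy : PairCommute x y) (hN : N ≠ 0) :
    QCommute ω⁻¹ (dilogArg x y) y.1 := by
  obtain ⟨h11, -, h21, -⟩ := pairCommute_iff.1 hxy
  unfold dilogArg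
  simpa only [one_mul] using
    (((qCommute_one_iff.2 h21.symm).ringInverse_left (hx.isUnit_snd hN)).mul_left
      (qCommute_one_iff.2 h11) |>.mul_left (hy.qCommute.symm (hω.ne_zero hN))).neg_left

theorem qCommute_dilogArg_right_snd (hx : IsCyclicWeylPair ω N x) (hxy : PairCommute x y)
    (hN : N ≠ 0) : QCommute (1 : ℂ) (dilogArg x y) y.2 := by
  obtain ⟨-, h12, -, h22⟩ := pairCommute_iff.1 hxy
  unfold dilogArg
  simpa only [one_mul] using
    (((qCommute_one_iff (R := ℂ)).2 h22.symm |>.ringInverse_left (hx.isUnit_snd hN)).mul_left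
      (qCommute_one_iff.2 h12) |>.mul_left (qCommute_one_iff.2 (Commute.refl y.2))).neg_left

theorem dilogArg_pow (hω : IsPrimitiveRoot ω N) (hx : IsCyclicWeylPair ω N x)
    (hy : IsCyclicWeylPair ω N y) (hxy : PairCommute x y) (hN : N ≠ 0) :
    dilogArg x y ^ N = -1 := by
  obtain ⟨-, h12, -, h22⟩ := pairCommute_iff.1 hxy
  have hx₂ := hx.isUnit_snd hN
  have hu : (Ring.inverse x.2 * x.1) ^ N = (-1) ^ (N + 1) := by
    rw [((hx.qCommute.ringInverse_left hx₂).symm (hω.ne_zero hN)).mul_pow, Ring.inverse_pow,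
      hx.2.2, Ring.inverse_one, one_mul, hx.2.1, hω.inv.pow_choose_two hN,
      ← Algebra.algebraMap_eq_smul_one, map_pow, map_neg, map_one]
  have hcomm : Commute (Ring.inverse x.2 * x.1) y.2 :=
    qCommute_one_iff.1 ((qCommute_one_iff (R := ℂ)).2 h22.symm |>.ringInverse_left hx₂)
      |>.mul_left h12
  rw [dilogArg, neg_pow, hcomm.mul_pow, hu, hy.2.2, mul_one, ← pow_add,
    Odd.neg_one_pow ⟨N, by ring⟩]

theorem commute_aeval_dilogArg_fst_mul_fst (hω : IsPrimitiveRoot ω N)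
    (hx : IsCyclicWeylPair ω N x) (hy : IsCyclicWeylPair ω N y) (hxy : PairCommute x y)
    (hN : N ≠ 0) (p : ℂ[X]) :
    Commute (aeval (dilogArg x y) p) (x.1 * y.1) := by
  have h := (qCommute_dilogArg_left_fst hx hxy hN).mul_right
    (qCommute_dilogArg_right_fst hω hx hy hxy hN)
  rw [mul_inv_cancel₀ (hω.ne_zero hN)] at h
  exact h.commute_aeval p

theorem commute_aeval_dilogArg_fst_mul_snd (hω : IsPrimitiveRoot ω N)
    (hx : IsCyclicWeylPair ω N x) (hy : IsCyclicWeylPair ω N y) (hxy : PairCommute x y)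
    (hN : N ≠ 0) (p : ℂ[X]) :
    Commute (aeval (dilogArg x y) p) (y.1 * x.2) := by
  have h := (qCommute_dilogArg_right_fst hω hx hy hxy hN).mul_right
    (qCommute_dilogArg_left_snd hx hxy hN)
  rw [inv_mul_cancel₀ (hω.ne_zero hN)] at h
  exact h.commute_aeval p

theorem lamPrime_pos {lam : ℝ} (hlam : 0 < lam) (N : ℕ) : 0 < lamPrime lam N :=
  Real.rpow_pos_of_pos (by positivity) _

theorem Cdot_snd_eq (lam : ℝ) (hx₂ : IsUnit x.2) :
    (Cdot lam N x y).2 =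
      (((lamPrime lam N)⁻¹ : ℝ) : ℂ) • (x.2 * (1 - (lam : ℂ) • dilogArg x y)) := by
  rw [mul_sub, mul_one, mul_smul_comm, snd_mul_dilogArg hx₂, smul_neg, sub_neg_eq_add]
  rfl

theorem isUnit_Cdot_snd {lam : ℝ} (hlam : 0 < lam) (hω : IsPrimitiveRoot ω N)
    (hx : IsCyclicWeylPair ω N x) (hy : IsCyclicWeylPair ω N y) (hxy : PairCommute x y)
    (hN : N ≠ 0) : IsUnit (Cdot lam N x y).2 := by
  have hpow : ((lam : ℂ) • dilogArg x y) ^ N = algebraMap ℂ A (-(lam : ℂ) ^ N) := by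
    rw [_root_.smul_pow, dilogArg_pow hω hx hy hxy hN, Algebra.algebraMap_eq_smul_one, neg_smul,
      smul_neg]
  have hne : -(lam : ℂ) ^ N ≠ 1 := by
    rw [← Complex.ofReal_pow, ← Complex.ofReal_neg, ← Complex.ofReal_one, Ne,
      Complex.ofReal_inj]
    linarith [pow_pos hlam N]
  rw [Cdot_snd_eq lam (hx.isUnit_snd hN), Algebra.smul_def]
  refine ((isUnit_iff_ne_zero.2 ?_).map _).mul
    ((hx.isUnit_snd hN).mul (isUnit_one_sub_of_pow_eq_algebraMap hpow hne))
  exact_mod_cast (inv_pos.2 (lamPrime_pos hlam N)).ne'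

theorem aeval_dilogArg_mul_Cdot_snd {lam : ℝ} (hlam : 0 < lam) (hω : IsPrimitiveRoot ω N)
    (hx : IsCyclicWeylPair ω N x) (hy : IsCyclicWeylPair ω N y) (hxy : PairCommute x y)
    (hN : N ≠ 0) {p : ℂ[X]}
    (hp : ∀ v : ℂ, v ^ N = -1 →
      (lamPrime lam N : ℂ) * p.eval v = p.eval (ω * v) * (1 - v * lam)) :
    aeval (dilogArg x y) p * (Cdot lam N x y).2 = x.2 * aeval (dilogArg x y) p := by
  rw [Cdot_snd_eq lam (hx.isUnit_snd hN), mul_smul_comm, ← mul_assoc,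
    (qCommute_dilogArg_left_snd hx hxy hN).aeval_mul, mul_assoc,
    aeval_smul_mul_one_sub_eq hω hN hp (dilogArg_pow hω hx hy hxy hN), mul_smul_comm, smul_smul,
    Complex.ofReal_inv, inv_mul_cancel₀ (by exact_mod_cast (lamPrime_pos hlam N).ne'), one_smul]

theorem commute_snd_weylSum (hxy : PairCommute x y) (ζ : ℂ) :
    Commute x.2 (weylSum ζ N y.1 x.2) :=
  commute_weylSum (pairCommute_iff.1 hxy).2.2.1 (Commute.refl x.2)

theorem commute_fst_weylSum (hxy : PairCommute x y) (ζ : ℂ) :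
    Commute y.1 (weylSum ζ N y.1 x.2) :=
  commute_weylSum (Commute.refl y.1) (pairCommute_iff.1 hxy).2.2.1.symm

theorem weylSum_mul_fst_mul_fst (hω : IsPrimitiveRoot ω N) (hx : IsCyclicWeylPair ω N x)
    (hy : IsCyclicWeylPair ω N y) (hxy : PairCommute x y) (hN : N ≠ 0) :
    weylSum ω⁻¹ N y.1 x.2 * (x.1 * y.1) = x.1 * weylSum ω⁻¹ N y.1 x.2 := by
  have hshift := mul_weylSum_smul_right (v := ω • x.2) hy.2.1 (hω.inv.pow_eq_one)
  rw [smul_smul, inv_mul_cancel₀ (hω.ne_zero hN), one_smul] at hshift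
  rw [mul_weylSum (qCommute_one_iff.2 (pairCommute_iff.1 hxy).1) hx.qCommute, one_smul,
    ← hshift, ← mul_assoc, (commute_fst_weylSum hxy _).eq, mul_assoc, mul_assoc,
    ((pairCommute_iff.1 hxy).1).eq]

theorem weylSum_mul_snd (hω : IsPrimitiveRoot ω N) (hx : IsCyclicWeylPair ω N x)
    (hy : IsCyclicWeylPair ω N y) (hxy : PairCommute x y) (hN : N ≠ 0) :
    weylSum ω⁻¹ N y.1 x.2 * y.2 = y.2 * weylSum ω⁻¹ N y.1 x.2 * x.2 := by
  rw [mul_weylSum (hy.qCommute.symm (hω.ne_zero hN))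
      (qCommute_one_iff.2 (pairCommute_iff.1 hxy).2.2.2.symm), one_smul, mul_assoc,
    ← ((pairCommute_iff.1 hxy).2.2.2).eq, ← mul_assoc,
    weylSum_smul_left_mul hx.2.2 hω.inv.pow_eq_one]

end CyclicWeylPair

theorem compact_qdilog_intertwines_general {A : Type*} [Ring A] [Algebra ℂ A]
    (N : ℕ) (hN : 2 ≤ N) (ω : ℂ) (hω : IsPrimitiveRoot ω N)
    (lam : ℝ) (hlam : 0 < lam)
    (x y : A × A)
    (hx : IsCyclicWeylPair ω N x) (hy : IsCyclicWeylPair ω N y)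
    (hxy : PairCommute x y)
    (Ψ : ℂ → ℂ)
    (hΨ : ∀ v : ℂ, v ^ N = -1 →
      ((lamPrime lam N : ℝ) : ℂ) * Ψ v = Ψ (ω * v) * (1 - v * lam))
    (p : Polynomial ℂ)
    (hp : ∀ v : ℂ, v ^ N = -1 → p.eval v = Ψ v) :
    (Tintertwiner ω N x y p * (Cdot lam N x y).1 = x.1 * Tintertwiner ω N x y p) ∧
    (Tintertwiner ω N x y p * (Cdot lam N x y).2 = x.2 * Tintertwiner ω N x y p) ∧
    (Tintertwiner ω N x y p * (Cstar lam N x y).1 = y.1 * Tintertwiner ω N x y p) ∧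
    (Tintertwiner ω N x y p * (Cstar lam N x y).2 = y.2 * Tintertwiner ω N x y p) := by
  have hN0 : N ≠ 0 := by omega
  have hpΨ : ∀ v : ℂ, v ^ N = -1 →
      (lamPrime lam N : ℂ) * p.eval v = p.eval (ω * v) * (1 - v * lam) := fun v hv => by
    rw [hp v hv, hp _ (by rw [mul_pow, hω.pow_eq_one, one_mul, hv]), hΨ v hv]
  have hPD := aeval_dilogArg_mul_Cdot_snd hlam hω hx hy hxy hN0 hpΨ
  have hDD := Ring.mul_inverse_cancel _ (isUnit_Cdot_snd hlam hω hx hy hxy hN0)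
  have hP₁ := commute_aeval_dilogArg_fst_mul_fst hω hx hy hxy hN0 p
  have hP₂ := commute_aeval_dilogArg_fst_mul_snd hω hx hy hxy hN0 p
  have hP₃ := (qCommute_dilogArg_right_snd hx hxy hN0).commute_aeval p
  rw [Tintertwiner_eq]
  set S := weylSum ω⁻¹ N y.1 x.2
  set P := aeval (dilogArg x y) p
  set D := (Cdot lam N x y).2
  refine ⟨?_, ?_, ?_, ?_⟩
  · calc S * P * (x.1 * y.1) = S * (x.1 * y.1) * P := by rw [mul_assoc, hP₁.eq, ← mul_assoc]
      _ = x.1 * (S * P) := by rw [weylSum_mul_fst_mul_fst hω hx hy hxy hN0, mul_assoc]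
  · rw [mul_assoc, hPD, ← mul_assoc, ← (commute_snd_weylSum hxy _).eq, mul_assoc]
  · calc S * P * (y.1 * x.2 * Ring.inverse D) = S * (y.1 * x.2) * P * Ring.inverse D := by
          rw [← mul_assoc, mul_assoc S, hP₂.eq, ← mul_assoc]
      _ = y.1 * S * (P * D) * Ring.inverse D := by
          rw [← mul_assoc S, ← (commute_fst_weylSum hxy _).eq, hPD, mul_assoc (y.1 * S)]
      _ = y.1 * (S * P) := by simp only [mul_assoc, hDD, mul_one]
  · calc S * P * (y.2 * Ring.inverse D) = S * y.2 * P * Ring.inverse D := by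
          rw [← mul_assoc, mul_assoc S, hP₃.eq, ← mul_assoc]
      _ = y.2 * S * (P * D) * Ring.inverse D := by
          rw [weylSum_mul_snd hω hx hy hxy hN0, hPD, mul_assoc (y.2 * S)]
      _ = y.2 * (S * P) := by simp only [mul_assoc, hDD, mul_one]

/-- If `Ψ` is a nonzero solution of the compact quantum dilogarithm equation on the `N`-th
roots of `−1`, and `p` is the polynomial of degree `< N` interpolating `Ψ` there, then
`T = (Σ ω^{−ij} y₁^i x₂^j) p(w)` (with `w = −x₂⁻¹x₁y₂`) intertwines the root-of-unity
decorated flip: `T (x•_λy)_k = x_k T` and `T (x*_λy)_k = y_k T` for `k = 1,2`. -/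
theorem compact_qdilog_intertwines {A : Type*} [Ring A] [Algebra ℂ A]
    (N : ℕ) (hN : 2 ≤ N) (ω : ℂ) (hω : IsPrimitiveRoot ω N)
    (lam : ℝ) (hlam : 0 < lam)
    (x y : A × A)
    (hx : IsCyclicWeylPair ω N x) (hy : IsCyclicWeylPair ω N y)
    (hxy : PairCommute x y)
    (Ψ : ℂ → ℂ)
    (hΨne : ∃ v : ℂ, v ^ N = -1 ∧ Ψ v ≠ 0)
    (hΨ : ∀ v : ℂ, v ^ N = -1 →
      ((lamPrime lam N : ℝ) : ℂ) * Ψ v = Ψ (ω * v) * (1 - v * lam))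
    (p : Polynomial ℂ) (hpdeg : p.degree < N)
    (hp : ∀ v : ℂ, v ^ N = -1 → p.eval v = Ψ v) :
    (Tintertwiner ω N x y p * (Cdot lam N x y).1 = x.1 * Tintertwiner ω N x y p) ∧
    (Tintertwiner ω N x y p * (Cdot lam N x y).2 = x.2 * Tintertwiner ω N x y p) ∧
    (Tintertwiner ω N x y p * (Cstar lam N x y).1 = y.1 * Tintertwiner ω N x y p) ∧
    (Tintertwiner ω N x y p * (Cstar lam N x y).2 = y.2 * Tintertwiner ω N x y p) :=
  compact_qdilog_intertwines_general N hN ω hω lam hlam x y hx hy hxy Ψ hΨ p hp
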